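/- Define t(n) = ∑_{j=0}^{n} C(n,j)³. Then t satisfies the recurrence (n+1)² t(n+1) = (7n²+7n+2) t(n) + 8n² t(n−1) for all n ≥ 1, with t(0)=1 and t(1)=2. -/

import Mathlib

open scoped BigOperators

/-- Franel numbers `t(n) = ∑_{j=0}^n C(n,j)³`. -/
def tseq (n : ℕ) : ℤ :=
  ∑ j ∈ Finset.range (n + 1), ((n.choose j : ℤ)) ^ 3

/-- coefficient polynomial in the certificate -/
def Acoef (n k : ℤ) : ℤ := -14*n^2 + 27*n*k - 32*n - 18*k^2 + 39*k - 22

/-- WZ certificate function -/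
def Gfun (n : ℕ) : ℕ → ℤ
  | 0 => 0
  | 1 => Acoef n 1
  | (k+2) => 4*(n:ℤ)^2 * (((n-1).choose k : ℤ))^3 + Acoef n (k+2) * ((n.choose (k+1) : ℤ))^3

lemma cross (m k : ℕ) : ((k:ℤ)+1) * (m.choose (k+1) : ℤ) = ((m:ℤ) - k) * (m.choose k : ℤ) := by
  rcases le_or_gt k m with h | h
  · have h0 := Nat.choose_succ_right_eq m k
    have h1 : ((m.choose (k+1) * (k+1) : ℕ) : ℤ) = ((m.choose k * (m-k) : ℕ) : ℤ) := by
      exact_mod_cast congrArg (fun t : ℕ => (t : ℤ)) h0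
    push_cast [Nat.cast_sub h] at h1
    linarith
  · rw [Nat.choose_eq_zero_of_lt h, Nat.choose_eq_zero_of_lt (by omega)]
    simp

lemma pointwise (m : ℕ) : ∀ k : ℕ,
    ((m:ℤ)+2)^2 * ((m+2).choose k : ℤ)^3
      - (7*((m:ℤ)+1)^2 + 7*((m:ℤ)+1) + 2) * ((m+1).choose k : ℤ)^3
      - 8*((m:ℤ)+1)^2 * (m.choose k : ℤ)^3
    = Gfun (m+1) (k+1) - Gfun (m+1) k
  | 0 => by
      simp [Gfun, Acoef]
      ring
  | 1 => by
      have hg2 : Gfun (m+1) 2 = 4*((m:ℤ)+1)^2 * ((m.choose 0 : ℤ))^3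
          + Acoef ((m:ℤ)+1) 2 * (((m+1).choose 1 : ℤ))^3 := by
        show Gfun (m+1) (0+2) = _
        rw [Gfun]
        push_cast [Nat.add_sub_cancel]
        ring
      have hg1 : Gfun (m+1) 1 = Acoef ((m:ℤ)+1) 1 := by
        rw [Gfun]; push_cast; ring
      rw [hg2, hg1]
      simp only [Nat.choose_one_right, Nat.choose_zero_right]
      unfold Acoef
      push_cast
      ring
  | (j+2) => by
      have hG1 : Gfun (m+1) (j+3) = 4*((m:ℤ)+1)^2 * ((m.choose (j+1) : ℤ))^3
          + Acoef ((m:ℤ)+1) ((j:ℤ)+3) * (((m+1).choose (j+2) : ℤ))^3 := by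
        show Gfun (m+1) ((j+1)+2) = _
        rw [Gfun]
        push_cast [Nat.add_sub_cancel]
        ring
      have hG0 : Gfun (m+1) (j+2) = 4*((m:ℤ)+1)^2 * ((m.choose j : ℤ))^3
          + Acoef ((m:ℤ)+1) ((j:ℤ)+2) * (((m+1).choose (j+1) : ℤ))^3 := by
        rw [Gfun]
        push_cast [Nat.add_sub_cancel]
        ring
      rw [hG1, hG0]
      have p1 : ((m+1).choose (j+1) : ℤ) = (m.choose j : ℤ) + (m.choose (j+1) : ℤ) := by
        rw [Nat.choose_succ_succ]; push_cast; ring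
      have p2 : ((m+1).choose (j+2) : ℤ) = (m.choose (j+1) : ℤ) + (m.choose (j+2) : ℤ) := by
        rw [Nat.choose_succ_succ]; push_cast; ring
      have p3 : ((m+2).choose (j+2) : ℤ) = ((m+1).choose (j+1) : ℤ) + ((m+1).choose (j+2) : ℤ) := by
        rw [Nat.choose_succ_succ (m+1)]; push_cast; ring
      set x := (m.choose j : ℤ) with hx
      set y := (m.choose (j+1) : ℤ) with hy
      set z := (m.choose (j+2) : ℤ) with hz
      have h1 : ((j:ℤ)+1) * y = ((m:ℤ) - j) * x := cross m j
      have h2 : ((j:ℤ)+2) * z = ((m:ℤ) - 1 - j) * y := by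
        have := cross m (j+1)
        push_cast at this
        rw [hy, hz]
        linarith [this]
      rw [p3, p2, p1]
      have hc : (((j:ℤ)+1)^3 * ((j:ℤ)+2)^3) ≠ 0 := by positivity
      apply mul_left_cancel₀ hc
      unfold Acoef
      linear_combination ((36:ℤ)*y^2 + (24:ℤ)*x*y + (-48:ℤ)*x^2 + (54:ℤ)*(j:ℤ)*y^2 + (-168:ℤ)*(j:ℤ)*x*y + (-360:ℤ)*(j:ℤ)*x^2 + (-210:ℤ)*(j:ℤ)^2*y^2 + (-1050:ℤ)*(j:ℤ)^2*x*y + (-1044:ℤ)*(j:ℤ)^2*x^2 + (-690:ℤ)*(j:ℤ)^3*y^2 + (-2112:ℤ)*(j:ℤ)^3*x*y + (-1566:ℤ)*(j:ℤ)^3*x^2 + (-828:ℤ)*(j:ℤ)^4*y^2 + (-2112:ℤ)*(j:ℤ)^4*x*y + (-1332:ℤ)*(j:ℤ)^4*x^2 + (-498:ℤ)*(j:ℤ)^5*y^2 + (-1140:ℤ)*(j:ℤ)^5*x*y + (-648:ℤ)*(j:ℤ)^5*x^2 + (-150:ℤ)*(j:ℤ)^6*y^2 + (-318:ℤ)*(j:ℤ)^6*x*y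 + (-168:ℤ)*(j:ℤ)^6*x^2 + (-18:ℤ)*(j:ℤ)^7*y^2 + (-36:ℤ)*(j:ℤ)^7*x*y + (-18:ℤ)*(j:ℤ)^7*x^2 + (102:ℤ)*(m:ℤ)*y^2 + (252:ℤ)*(m:ℤ)*x*y + (72:ℤ)*(m:ℤ)*x^2 + (531:ℤ)*(m:ℤ)*(j:ℤ)*y^2 + (1152:ℤ)*(m:ℤ)*(j:ℤ)*x*y + (324:ℤ)*(m:ℤ)*(j:ℤ)*x^2 + (1122:ℤ)*(m:ℤ)*(j:ℤ)^2*y^2 + (2151:ℤ)*(m:ℤ)*(j:ℤ)^2*x*y + (594:ℤ)*(m:ℤ)*(j:ℤ)^2*x^2 + (1227:ℤ)*(m:ℤ)*(j:ℤ)^3*y^2 + (2097:ℤ)*(m:ℤ)*(j:ℤ)^3*x*y + (567:ℤ)*(m:ℤ)*(j:ℤ)^3*x^2 + (729:ℤ)*(m:ℤ)*(j:ℤ)^4*y^2 + (1125:ℤ)*(m:ℤ)*(j:ℤ)^4*x*y + (297:ℤ)*(m:ℤ)*(j:ℤ)^4*x^2 + (222:ℤ)*(m:ℤ)*(j:ℤ)^5*y^2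 + (315:ℤ)*(m:ℤ)*(j:ℤ)^5*x*y + (81:ℤ)*(m:ℤ)*(j:ℤ)^5*x^2 + (27:ℤ)*(m:ℤ)*(j:ℤ)^6*y^2 + (36:ℤ)*(m:ℤ)*(j:ℤ)^6*x*y + (9:ℤ)*(m:ℤ)*(j:ℤ)^6*x^2 + (-60:ℤ)*(m:ℤ)^2*y^2 + (-12:ℤ)*(m:ℤ)^2*x*y + (-228:ℤ)*(m:ℤ)^2*(j:ℤ)*y^2 + (-48:ℤ)*(m:ℤ)^2*(j:ℤ)*x*y + (-333:ℤ)*(m:ℤ)^2*(j:ℤ)^2*y^2 + (-75:ℤ)*(m:ℤ)^2*(j:ℤ)^2*x*y + (-231:ℤ)*(m:ℤ)^2*(j:ℤ)^3*y^2 + (-57:ℤ)*(m:ℤ)^2*(j:ℤ)^3*x*y + (-75:ℤ)*(m:ℤ)^2*(j:ℤ)^4*y^2 + (-21:ℤ)*(m:ℤ)^2*(j:ℤ)^4*x*y + (-9:ℤ)*(m:ℤ)^2*(j:ℤ)^5*y^2 + (-3:ℤ)*(m:ℤ)^2*(j:ℤ)^5*x*y + (-6:ℤ)*(m:ℤ)^3*y^2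 + (-21:ℤ)*(m:ℤ)^3*(j:ℤ)*y^2 + (-27:ℤ)*(m:ℤ)^3*(j:ℤ)^2*y^2 + (-15:ℤ)*(m:ℤ)^3*(j:ℤ)^3*y^2 + (-3:ℤ)*(m:ℤ)^3*(j:ℤ)^4*y^2) * h1 + ((48:ℤ)*z^2 + (264:ℤ)*y*z + (252:ℤ)*y^2 + (48:ℤ)*x*z + (168:ℤ)*x*y + (48:ℤ)*x^2 + (360:ℤ)*(j:ℤ)*z^2 + (1464:ℤ)*(j:ℤ)*y*z + (1242:ℤ)*(j:ℤ)*y^2 + (192:ℤ)*(j:ℤ)*x*z + (660:ℤ)*(j:ℤ)*x*y + (192:ℤ)*(j:ℤ)*x^2 + (1044:ℤ)*(j:ℤ)^2*z^2 + (3426:ℤ)*(j:ℤ)^2*y*z + (2586:ℤ)*(j:ℤ)^2*y^2 + (300:ℤ)*(j:ℤ)^2*x*z + (1008:ℤ)*(j:ℤ)^2*x*y + (300:ℤ)*(j:ℤ)^2*x^2 + (1566:ℤ)*(j:ℤ)^3*z^2 + (4380:ℤ)*(j:ℤ)^3*y*z + (2958:ℤ)*(j:ℤ)^3*y^2 + (228:ℤ)*(j:ℤ)^3*x*z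 + (744:ℤ)*(j:ℤ)^3*x*y + (228:ℤ)*(j:ℤ)^3*x^2 + (1332:ℤ)*(j:ℤ)^4*z^2 + (3300:ℤ)*(j:ℤ)^4*y*z + (2016:ℤ)*(j:ℤ)^4*y^2 + (84:ℤ)*(j:ℤ)^4*x*z + (264:ℤ)*(j:ℤ)^4*x*y + (84:ℤ)*(j:ℤ)^4*x^2 + (648:ℤ)*(j:ℤ)^5*z^2 + (1464:ℤ)*(j:ℤ)^5*y*z + (822:ℤ)*(j:ℤ)^5*y^2 + (12:ℤ)*(j:ℤ)^5*x*z + (36:ℤ)*(j:ℤ)^5*x*y + (12:ℤ)*(j:ℤ)^5*x^2 + (168:ℤ)*(j:ℤ)^6*z^2 + (354:ℤ)*(j:ℤ)^6*y*z + (186:ℤ)*(j:ℤ)^6*y^2 + (18:ℤ)*(j:ℤ)^7*z^2 + (36:ℤ)*(j:ℤ)^7*y*z + (18:ℤ)*(j:ℤ)^7*y^2 + (-216:ℤ)*(m:ℤ)*z^2 + (-276:ℤ)*(m:ℤ)*y*z + (-42:ℤ)*(m:ℤ)*y^2 + (48:ℤ)*(m:ℤ)*x*z + (192:ℤ)*(m:ℤ)*x*y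 + (48:ℤ)*(m:ℤ)*x^2 + (-972:ℤ)*(m:ℤ)*(j:ℤ)*z^2 + (-1248:ℤ)*(m:ℤ)*(j:ℤ)*y*z + (-213:ℤ)*(m:ℤ)*(j:ℤ)*y^2 + (192:ℤ)*(m:ℤ)*(j:ℤ)*x*z + (744:ℤ)*(m:ℤ)*(j:ℤ)*x*y + (192:ℤ)*(m:ℤ)*(j:ℤ)*x^2 + (-1782:ℤ)*(m:ℤ)*(j:ℤ)^2*z^2 + (-2301:ℤ)*(m:ℤ)*(j:ℤ)^2*y*z + (-438:ℤ)*(m:ℤ)*(j:ℤ)^2*y^2 + (300:ℤ)*(m:ℤ)*(j:ℤ)^2*x*z + (1116:ℤ)*(m:ℤ)*(j:ℤ)^2*x*y + (300:ℤ)*(m:ℤ)*(j:ℤ)^2*x^2 + (-1701:ℤ)*(m:ℤ)*(j:ℤ)^3*z^2 + (-2211:ℤ)*(m:ℤ)*(j:ℤ)^3*y*z + (-465:ℤ)*(m:ℤ)*(j:ℤ)^3*y^2 + (228:ℤ)*(m:ℤ)*(j:ℤ)^3*x*z + (804:ℤ)*(m:ℤ)*(j:ℤ)^3*x*y + (228:ℤ)*(m:ℤ)*(j:ℤ)^3*x^2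 + (-891:ℤ)*(m:ℤ)*(j:ℤ)^4*z^2 + (-1167:ℤ)*(m:ℤ)*(j:ℤ)^4*y*z + (-267:ℤ)*(m:ℤ)*(j:ℤ)^4*y^2 + (84:ℤ)*(m:ℤ)*(j:ℤ)^4*x*z + (276:ℤ)*(m:ℤ)*(j:ℤ)^4*x*y + (84:ℤ)*(m:ℤ)*(j:ℤ)^4*x^2 + (-243:ℤ)*(m:ℤ)*(j:ℤ)^5*z^2 + (-321:ℤ)*(m:ℤ)*(j:ℤ)^5*y*z + (-78:ℤ)*(m:ℤ)*(j:ℤ)^5*y^2 + (12:ℤ)*(m:ℤ)*(j:ℤ)^5*x*z + (36:ℤ)*(m:ℤ)*(j:ℤ)^5*x*y + (12:ℤ)*(m:ℤ)*(j:ℤ)^5*x^2 + (-27:ℤ)*(m:ℤ)*(j:ℤ)^6*z^2 + (-36:ℤ)*(m:ℤ)*(j:ℤ)^6*y*z + (-9:ℤ)*(m:ℤ)*(j:ℤ)^6*y^2 + (-6:ℤ)*(m:ℤ)^2*y^2 + (12:ℤ)*(m:ℤ)^2*x*z + (66:ℤ)*(m:ℤ)^2*x*y + (12:ℤ)*(m:ℤ)^2*x^2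 + (-27:ℤ)*(m:ℤ)^2*(j:ℤ)*y^2 + (48:ℤ)*(m:ℤ)^2*(j:ℤ)*x*z + (249:ℤ)*(m:ℤ)^2*(j:ℤ)*x*y + (48:ℤ)*(m:ℤ)^2*(j:ℤ)*x^2 + (-48:ℤ)*(m:ℤ)^2*(j:ℤ)^2*y^2 + (75:ℤ)*(m:ℤ)^2*(j:ℤ)^2*x*z + (360:ℤ)*(m:ℤ)^2*(j:ℤ)^2*x*y + (75:ℤ)*(m:ℤ)^2*(j:ℤ)^2*x^2 + (-42:ℤ)*(m:ℤ)^2*(j:ℤ)^3*y^2 + (57:ℤ)*(m:ℤ)^2*(j:ℤ)^3*x*z + (246:ℤ)*(m:ℤ)^2*(j:ℤ)^3*x*y + (57:ℤ)*(m:ℤ)^2*(j:ℤ)^3*x^2 + (-18:ℤ)*(m:ℤ)^2*(j:ℤ)^4*y^2 + (21:ℤ)*(m:ℤ)^2*(j:ℤ)^4*x*z + (78:ℤ)*(m:ℤ)^2*(j:ℤ)^4*x*y + (21:ℤ)*(m:ℤ)^2*(j:ℤ)^4*x^2 + (-3:ℤ)*(m:ℤ)^2*(j:ℤ)^5*y^2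 + (3:ℤ)*(m:ℤ)^2*(j:ℤ)^5*x*z + (9:ℤ)*(m:ℤ)^2*(j:ℤ)^5*x*y + (3:ℤ)*(m:ℤ)^2*(j:ℤ)^5*x^2 + (6:ℤ)*(m:ℤ)^3*x*y + (21:ℤ)*(m:ℤ)^3*(j:ℤ)*x*y + (27:ℤ)*(m:ℤ)^3*(j:ℤ)^2*x*y + (15:ℤ)*(m:ℤ)^3*(j:ℤ)^3*x*y + (3:ℤ)*(m:ℤ)^3*(j:ℤ)^4*x*y) * h2

theorem stmt4 :
    tseq 0 = 1 ∧ tseq 1 = 2 ∧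
      ∀ n : ℕ, 1 ≤ n →
        ((n : ℤ) + 1) ^ 2 * tseq (n + 1)
          = (7 * (n : ℤ) ^ 2 + 7 * n + 2) * tseq n + 8 * (n : ℤ) ^ 2 * tseq (n - 1) := by
  refine ⟨by norm_num [tseq], by norm_num [tseq, Finset.sum_range_succ], ?_⟩
  intro n hn
  obtain ⟨m, rfl⟩ : ∃ m, n = m + 1 := ⟨n - 1, by omega⟩
  have tel : ∑ k ∈ Finset.range (m+3), (Gfun (m+1) (k+1) - Gfun (m+1) k)
      = Gfun (m+1) (m+3) - Gfun (m+1) 0 := Finset.sum_range_sub (Gfun (m+1)) (m+3)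
  have hGtop : Gfun (m+1) (m+3) = 0 := by
    show Gfun (m+1) ((m+1)+2) = 0
    rw [Gfun]
    rw [Nat.add_sub_cancel, Nat.choose_succ_self, Nat.choose_succ_self]
    push_cast; ring
  have hG0 : Gfun (m+1) 0 = 0 := rfl
  have hsum : ∑ k ∈ Finset.range (m+3),
      (((m:ℤ)+2)^2 * ((m+2).choose k : ℤ)^3
        - (7*((m:ℤ)+1)^2 + 7*((m:ℤ)+1) + 2) * ((m+1).choose k : ℤ)^3
        - 8*((m:ℤ)+1)^2 * (m.choose k : ℤ)^3) = 0 := by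
    rw [Finset.sum_congr rfl (fun k _ => pointwise m k), tel, hGtop, hG0]
    ring
  rw [Finset.sum_sub_distrib, Finset.sum_sub_distrib, ← Finset.mul_sum, ← Finset.mul_sum,
    ← Finset.mul_sum] at hsum
  have e2 : ∑ k ∈ Finset.range (m+3), ((m+2).choose k : ℤ)^3 = tseq (m+2) := rfl
  have e1 : ∑ k ∈ Finset.range (m+3), ((m+1).choose k : ℤ)^3 = tseq (m+1) := by
    rw [Finset.sum_range_succ, Nat.choose_succ_self]
    simp [tseq]
  have e0 : ∑ k ∈ Finset.range (m+3), (m.choose k : ℤ)^3 = tseq m := by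
    rw [Finset.sum_range_succ, Finset.sum_range_succ, Nat.choose_succ_self,
      Nat.choose_eq_zero_of_lt (by omega)]
    simp [tseq]
  rw [e2, e1, e0] at hsum
  have hres : tseq (m+1-1) = tseq m := by norm_num
  rw [hres]
  push_cast
  linarith [hsum]
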